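/- The function ρ(z) = (e^{-z} - 1)/z for z ≠ 0 (extended by ρ(0) = -1) is strictly negative on ℝ, satisfies ρ'(z) > 0 for all z ≠ 0, and satisfies ρ(z) + ρ'(z) < 0 for all z ≠ 0. -/

import Mathlib

/-- The function `ρ z = (e^{-z}-1)/z` for `z ≠ 0`, extended by `ρ 0 = -1`. -/
noncomputable def rho10 (z : ℝ) : ℝ := if z = 0 then -1 else (Real.exp (-z) - 1) / z

lemma rho10_neg (z : ℝ) : rho10 z < 0 := by
  unfold rho10
  rcases eq_or_ne z 0 with h | h
  · simp [h]
  rw [if_neg h]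
  rcases lt_or_gt_of_ne h with hz | hz
  · apply div_neg_of_pos_of_neg _ hz
    have : (1:ℝ) < Real.exp (-z) := Real.one_lt_exp_iff.mpr (by linarith)
    linarith
  · apply div_neg_of_neg_of_pos _ hz
    have : Real.exp (-z) < 1 := Real.exp_lt_one_iff.mpr (by linarith)
    linarith

/-- `ρ` is strictly negative on `ℝ`, and for `z ≠ 0` its derivative
`ρ' z = (-z e^{-z} - e^{-z} + 1)/z²` satisfies `ρ' z > 0` and `ρ z + ρ' z < 0`. -/
theorem stmt_10 :
    (∀ z : ℝ, rho10 z < 0) ∧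
    (∀ z : ℝ, z ≠ 0 →
      HasDerivAt rho10 ((-z * Real.exp (-z) - Real.exp (-z) + 1) / z ^ 2) z ∧
      0 < (-z * Real.exp (-z) - Real.exp (-z) + 1) / z ^ 2 ∧
      rho10 z + (-z * Real.exp (-z) - Real.exp (-z) + 1) / z ^ 2 < 0) := by
  refine ⟨rho10_neg, fun z hz => ?_⟩
  have hz2 : (0:ℝ) < z ^ 2 := by positivity
  have hderiv : HasDerivAt rho10 ((-z * Real.exp (-z) - Real.exp (-z) + 1) / z ^ 2) z := by
    have h1 : HasDerivAt (fun z : ℝ => Real.exp (-z) - 1) (-Real.exp (-z)) z := by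
      simpa using ((Real.hasDerivAt_exp (-z)).comp z ((hasDerivAt_id z).neg)).sub_const 1
    have h := h1.div (hasDerivAt_id z) hz
    have heq : rho10 =ᶠ[nhds z] fun z => (Real.exp (-z) - 1) / z := by
      filter_upwards [isOpen_ne.mem_nhds hz] with x hx
      simp [rho10, hx]
    refine (HasDerivAt.congr_of_eventuallyEq ?_ heq)
    convert h using 1
    · rfl
    · rfl
    · simp only [id]
      ring
  refine ⟨hderiv, ?_, ?_⟩
  · apply div_pos _ hz2
    have h := Real.add_one_lt_exp hz
    have he : 0 < Real.exp (-z) := Real.exp_pos _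
    have h2 := mul_lt_mul_of_pos_right h he
    rw [← Real.exp_add] at h2
    simp at h2
    linarith
  · have h := Real.add_one_lt_exp (neg_ne_zero.2 hz)
    have hsum : rho10 z + (-z * Real.exp (-z) - Real.exp (-z) + 1) / z ^ 2
        = (1 - z - Real.exp (-z)) / z ^ 2 := by
      rw [rho10, if_neg hz]
      field_simp
      ring
    rw [hsum]
    apply div_neg_of_neg_of_pos _ hz2
    linarith
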